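/- arXiv:2101.02854 — 6 statements merged into one kernel-verified Lean document; each statement's English description precedes it below -/
import Mathlib

section
/- Let k ≥ 2 and Δ ≥ 1, and let 𝒮 be a simple set family on a finite universe V that is a sunflower-bouquet with nonempty core U = {u₁, …, u_m}, in which every set has cardinality at most k and every element lies in at most Δ sets of 𝒮. For i ∈ [m] let V_i = ⋃_{S ∈ 𝒮, u_i ∈ S} (S \ {u_i}). Then there exists a map g : V → [0,1]^{2kΔ} such that: (i) ‖g(S)‖_∞ ≤ 1 for every S ∈ 𝒮; (ii) ‖g(S)‖_∞ ≤ 1 for every S ⊆ V with S ∩ U = ∅ and |S| ≤ k; and (iii) ‖g(S)‖_∞ > 1 for every S ⊆ V such that u_i ∈ S and S ∩ V_{i'} ≠ ∅ for some indices i, i' ∈ [m] with i' ≠ i. -/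
open Finset

/-- Auxiliary one-coordinate construction: given a "rank" function `r` on the core
indices, we build a single coordinate `f : V → ℝ` handling all cross pairs
`(i, i')` with `r i < r i'`. -/
theorem sunflower_bouquet_aux
    {V : Type*} [Fintype V] [DecidableEq V]
    (k m : ℕ) (hk : 2 ≤ k)
    (u : Fin m → V) (hu : Function.Injective u)
    (𝒮 : Finset (Finset V))
    (hcoreone : ∀ S ∈ 𝒮, (S ∩ Finset.univ.image u).card = 1)
    (hbouquet : ∀ S₁ ∈ 𝒮, ∀ S₂ ∈ 𝒮, (S₁ ∩ S₂).Nonempty →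
        S₁ ∩ Finset.univ.image u = S₂ ∩ Finset.univ.image u ∧
        S₁ ∩ Finset.univ.image u = S₁ ∩ S₂)
    (hcard : ∀ S ∈ 𝒮, S.card ≤ k)
    (r : Fin m → ℕ) :
    ∃ f : V → ℝ,
      (∀ v, 0 ≤ f v ∧ f v ≤ 1) ∧
      (∀ S ∈ 𝒮, ∑ v ∈ S, f v ≤ 1) ∧
      (∀ S : Finset V, S ∩ Finset.univ.image u = ∅ → S.card ≤ k →
        ∑ v ∈ S, f v ≤ 1) ∧
      (∀ S : Finset V, ∀ i i' : Fin m, r i < r i' → u i ∈ S →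
        (∃ v ∈ S, ∃ T ∈ 𝒮, u i' ∈ T ∧ v ∈ T ∧ v ≠ u i') →
        1 < ∑ v ∈ S, f v) := by
  classical
  have hkR : (2 : ℝ) ≤ (k : ℝ) := by exact_mod_cast hk
  have hkpos : (0 : ℝ) < (k : ℝ) := by linarith
  set M : ℕ := (Finset.univ : Finset (Fin m)).sup r with hM
  set w : Fin m → ℝ := fun i => (k : ℝ) ^ (r i) / (k : ℝ) ^ (M + 1) with hw
  have hw_pos : ∀ i, 0 < w i := fun i => div_pos (pow_pos hkpos _) (pow_pos hkpos _)
  have hw_le : ∀ i, w i ≤ 1 / (k : ℝ) := by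
    intro i
    have h1 : (k : ℝ) ^ (r i) ≤ (k : ℝ) ^ M :=
      pow_le_pow_right₀ (by linarith) (Finset.le_sup (Finset.mem_univ i))
    have h2 : (k : ℝ) ^ M / (k : ℝ) ^ (M + 1) = 1 / (k : ℝ) := by
      rw [pow_succ]; field_simp
    rw [← h2, hw]
    exact div_le_div_of_nonneg_right h1 (pow_pos hkpos _).le
  have hcross : ∀ i i', r i < r i' → ((k : ℝ) - 1) * w i < w i' := by
    intro i i' hr
    have h1 : (k : ℝ) ^ (r i + 1) ≤ (k : ℝ) ^ (r i') :=
      pow_le_pow_right₀ (by linarith) (by omega)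
    have h2 : ((k : ℝ) - 1) * (k : ℝ) ^ (r i) < (k : ℝ) ^ (r i + 1) := by
      rw [pow_succ]; nlinarith [pow_pos hkpos (r i)]
    have h3 : ((k : ℝ) - 1) * (k : ℝ) ^ (r i) < (k : ℝ) ^ (r i') := lt_of_lt_of_le h2 h1
    rw [hw]
    simp only
    rw [mul_div_assoc']
    exact div_lt_div_of_pos_right h3 (pow_pos hkpos _)
  -- uniqueness of the sunflower containing a given element
  have him : ∀ j : Fin m, u j ∈ Finset.univ.image u :=
    fun j => Finset.mem_image_of_mem u (Finset.mem_univ j)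
  have huniq : ∀ (v : V) (j₁ j₂ : Fin m) (T₁ T₂ : Finset V), T₁ ∈ 𝒮 → T₂ ∈ 𝒮 →
      u j₁ ∈ T₁ → v ∈ T₁ → u j₂ ∈ T₂ → v ∈ T₂ → j₁ = j₂ := by
    intro v j₁ j₂ T₁ T₂ h1 h2 hu1 hv1 hu2 hv2
    apply hu
    by_cases hTT : T₁ = T₂
    · subst hTT
      obtain ⟨a, ha⟩ := Finset.card_eq_one.mp (hcoreone T₁ h1)
      have e1 : u j₁ ∈ T₁ ∩ Finset.univ.image u := Finset.mem_inter.mpr ⟨hu1, him j₁⟩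
      have e2 : u j₂ ∈ T₁ ∩ Finset.univ.image u := Finset.mem_inter.mpr ⟨hu2, him j₂⟩
      rw [ha, Finset.mem_singleton] at e1 e2
      rw [e1, e2]
    · have hne : (T₁ ∩ T₂).Nonempty := ⟨v, Finset.mem_inter.mpr ⟨hv1, hv2⟩⟩
      have heq := (hbouquet T₁ h1 T₂ h2 hne).1
      obtain ⟨a, ha⟩ := Finset.card_eq_one.mp (hcoreone T₁ h1)
      have e1 : u j₁ ∈ T₁ ∩ Finset.univ.image u := Finset.mem_inter.mpr ⟨hu1, him j₁⟩
      have e2 : u j₂ ∈ T₂ ∩ Finset.univ.image u := Finset.mem_inter.mpr ⟨hu2, him j₂⟩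
      rw [ha, Finset.mem_singleton] at e1
      rw [← heq, ha, Finset.mem_singleton] at e2
      rw [e1, e2]
  set f : V → ℝ := fun v =>
    if h : ∃ i : Fin m, u i = v then 1 - ((k : ℝ) - 1) * w h.choose
    else if h2 : ∃ i : Fin m, ∃ T ∈ 𝒮, u i ∈ T ∧ v ∈ T then w h2.choose else 0
    with hf
  have hfcore : ∀ i : Fin m, f (u i) = 1 - ((k : ℝ) - 1) * w i := by
    intro i
    have h : ∃ j : Fin m, u j = u i := ⟨i, rfl⟩
    rw [hf]
    simp only
    rw [dif_pos h]
    have := h.choose_spec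
    rw [hu this]
  have hfpetal : ∀ v, v ∉ Set.range u → ∀ i, ∀ T ∈ 𝒮, u i ∈ T → v ∈ T → f v = w i := by
    intro v hv i T hT huT hvT
    have h1 : ¬∃ j : Fin m, u j = v := by
      rintro ⟨j, rfl⟩; exact hv ⟨j, rfl⟩
    have h2 : ∃ j : Fin m, ∃ T ∈ 𝒮, u j ∈ T ∧ v ∈ T := ⟨i, T, hT, huT, hvT⟩
    rw [hf]
    simp only
    rw [dif_neg h1, dif_pos h2]
    obtain ⟨T', hT', huT', hvT'⟩ := h2.choose_spec
    exact congrArg w (huniq v h2.choose i T' T hT' hT huT' hvT' huT hvT)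
  have hfle : ∀ v, v ∉ Set.range u → f v ≤ 1 / (k : ℝ) := by
    intro v hv
    have h1 : ¬∃ j : Fin m, u j = v := by
      rintro ⟨j, rfl⟩; exact hv ⟨j, rfl⟩
    rw [hf]
    simp only
    rw [dif_neg h1]
    by_cases h2 : ∃ j : Fin m, ∃ T ∈ 𝒮, u j ∈ T ∧ v ∈ T
    · rw [dif_pos h2]; exact hw_le _
    · rw [dif_neg h2]; positivity
  have hbounds : ∀ v, 0 ≤ f v ∧ f v ≤ 1 := by
    intro v
    by_cases h1 : ∃ j : Fin m, u j = v
    · obtain ⟨j, rfl⟩ := h1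
      rw [hfcore j]
      have h1 : ((k : ℝ) - 1) * w j ≤ ((k : ℝ) - 1) * (1 / (k : ℝ)) :=
        mul_le_mul_of_nonneg_left (hw_le j) (by linarith)
      have h2 : ((k : ℝ) - 1) * (1 / (k : ℝ)) = 1 - 1 / (k : ℝ) := by field_simp
      have h3 : 0 < 1 / (k : ℝ) := by positivity
      constructor
      · linarith
      · nlinarith [hw_pos j]
    · have hvr : v ∉ Set.range u := by
        rintro ⟨j, rfl⟩; exact h1 ⟨j, rfl⟩
      have hle := hfle v hvr
      have hge : 0 ≤ f v := by
        rw [hf]; simp only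
        rw [dif_neg h1]
        by_cases h2 : ∃ j : Fin m, ∃ T ∈ 𝒮, u j ∈ T ∧ v ∈ T
        · rw [dif_pos h2]; exact (hw_pos _).le
        · rw [dif_neg h2]
      exact ⟨hge, hle.trans (by rw [div_le_one hkpos]; linarith)⟩
  refine ⟨f, hbounds, ?_, ?_, ?_⟩
  · -- sets in the family
    intro S hS
    obtain ⟨a, ha⟩ := Finset.card_eq_one.mp (hcoreone S hS)
    have haS : a ∈ S ∧ a ∈ Finset.univ.image u := by
      have : a ∈ S ∩ Finset.univ.image u := ha ▸ Finset.mem_singleton_self a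
      exact Finset.mem_inter.mp this
    obtain ⟨i, _, hi⟩ := Finset.mem_image.mp haS.2
    have huiS : u i ∈ S := hi ▸ haS.1
    have hpet : ∀ v ∈ S.erase (u i), f v = w i := by
      intro v hv
      have hvne := Finset.ne_of_mem_erase hv
      have hvS := Finset.mem_of_mem_erase hv
      have hvnr : v ∉ Set.range u := by
        rintro ⟨j, rfl⟩
        have : u j ∈ S ∩ Finset.univ.image u := Finset.mem_inter.mpr ⟨hvS, him j⟩
        rw [ha, Finset.mem_singleton] at this
        exact hvne (this.trans hi.symm)
      exact hfpetal v hvnr i S hS huiS hvS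
    rw [← Finset.add_sum_erase S f huiS, hfcore i,
      Finset.sum_congr rfl hpet, Finset.sum_const, nsmul_eq_mul]
    have hc1 : (S.erase (u i)).card + 1 ≤ k := by
      rw [Finset.card_erase_of_mem huiS]
      have h1 : 1 ≤ S.card := Finset.card_pos.mpr ⟨u i, huiS⟩
      have h2 := hcard S hS
      omega
    have hcR : ((S.erase (u i)).card : ℝ) ≤ (k : ℝ) - 1 := by
      have : ((S.erase (u i)).card : ℝ) + 1 ≤ (k : ℝ) := by exact_mod_cast hc1
      linarith
    nlinarith [hw_pos i]
  · -- core-avoiding small sets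
    intro S hSU hSk
    have hle : ∀ v ∈ S, f v ≤ 1 / (k : ℝ) := by
      intro v hv
      apply hfle
      rintro ⟨j, rfl⟩
      have : u j ∈ S ∩ Finset.univ.image u := Finset.mem_inter.mpr ⟨hv, him j⟩
      rw [hSU] at this
      exact absurd this (Finset.notMem_empty _)
    calc ∑ v ∈ S, f v ≤ ∑ _v ∈ S, 1 / (k : ℝ) := Finset.sum_le_sum hle
      _ = S.card * (1 / (k : ℝ)) := by rw [Finset.sum_const, nsmul_eq_mul]
      _ ≤ (k : ℝ) * (1 / (k : ℝ)) := by
          apply mul_le_mul_of_nonneg_right _ (by positivity)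
          exact_mod_cast hSk
      _ = 1 := by field_simp
  · -- cross-sunflower sets
    rintro S i i' hr huiS ⟨v, hvS, T, hT, hui'T, hvT, hvne⟩
    have hvnr : v ∉ Set.range u := by
      rintro ⟨j, rfl⟩
      obtain ⟨a, ha⟩ := Finset.card_eq_one.mp (hcoreone T hT)
      have e1 : u j ∈ T ∩ Finset.univ.image u := Finset.mem_inter.mpr ⟨hvT, him j⟩
      have e2 : u i' ∈ T ∩ Finset.univ.image u := Finset.mem_inter.mpr ⟨hui'T, him i'⟩
      rw [ha, Finset.mem_singleton] at e1 e2
      exact hvne (e1.trans e2.symm)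
    have hfv : f v = w i' := hfpetal v hvnr i' T hT hui'T hvT
    have hne2 : u i ≠ v := fun h => hvnr ⟨i, h⟩
    have hsub : ({u i, v} : Finset V) ⊆ S := by
      intro x hx
      rcases Finset.mem_insert.mp hx with rfl | hx
      · exact huiS
      · rw [Finset.mem_singleton] at hx; exact hx ▸ hvS
    have hsum : f (u i) + f v ≤ ∑ x ∈ S, f x := by
      rw [← Finset.sum_pair hne2]
      exact Finset.sum_le_sum_of_subset_of_nonneg hsub (fun x _ _ => (hbounds x).1)
    rw [hfcore i, hfv] at hsum
    have := hcross i i' hr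
    linarith

/-- Step 1 of the sunflower-bouquet embedding: eliminating cross-sunflower sets,
using `2kΔ` dimensions. Here the core is `U = {u 1, …, u m}` and
`V_i = ⋃_{S ∈ 𝒮, u i ∈ S} (S \ {u i})`. -/
theorem sunflower_bouquet_cross_sunflower_embedding
    {V : Type*} [Fintype V] [DecidableEq V]
    (k Δ m : ℕ) (hk : 2 ≤ k) (hΔ : 1 ≤ Δ) (hm : 1 ≤ m)
    (u : Fin m → V) (hu : Function.Injective u)
    (𝒮 : Finset (Finset V))
    (hsimple : ∀ S₁ ∈ 𝒮, ∀ S₂ ∈ 𝒮, S₁ ≠ S₂ → (S₁ ∩ S₂).card ≤ 1)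
    (hcoreone : ∀ S ∈ 𝒮, (S ∩ Finset.univ.image u).card = 1)
    (hcorecov : ∀ i : Fin m, ∃ S ∈ 𝒮, u i ∈ S)
    (hbouquet : ∀ S₁ ∈ 𝒮, ∀ S₂ ∈ 𝒮, (S₁ ∩ S₂).Nonempty →
        S₁ ∩ Finset.univ.image u = S₂ ∩ Finset.univ.image u ∧
        S₁ ∩ Finset.univ.image u = S₁ ∩ S₂)
    (hcard : ∀ S ∈ 𝒮, S.card ≤ k)
    (hdeg : ∀ v : V, (𝒮.filter (fun S => v ∈ S)).card ≤ Δ) :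
    ∃ g : V → Fin (2 * k * Δ) → ℝ,
      (∀ v j, 0 ≤ g v j ∧ g v j ≤ 1) ∧
      -- (i) every set in the family has sum at most 1 in every coordinate
      (∀ S ∈ 𝒮, ∀ j, ∑ v ∈ S, g v j ≤ 1) ∧
      -- (ii) small sets avoiding the core have sum at most 1 in every coordinate
      (∀ S : Finset V, S ∩ Finset.univ.image u = ∅ → S.card ≤ k →
        ∀ j, ∑ v ∈ S, g v j ≤ 1) ∧
      -- (iii) cross-sunflower sets exceed 1 in some coordinate
      (∀ S : Finset V, ∀ i i' : Fin m, i' ≠ i → u i ∈ S →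
        (S ∩ (𝒮.filter (fun T => u i' ∈ T)).biUnion (fun T => T.erase (u i'))).Nonempty →
        ∃ j, 1 < ∑ v ∈ S, g v j) := by
  classical
  obtain ⟨fA, hA0, hA1, hA2, hA3⟩ :=
    sunflower_bouquet_aux k m hk u hu 𝒮 hcoreone hbouquet hcard (fun i => i.val)
  obtain ⟨fB, hB0, hB1, hB2, hB3⟩ :=
    sunflower_bouquet_aux k m hk u hu 𝒮 hcoreone hbouquet hcard (fun i => m - 1 - i.val)
  have hdim : 1 < 2 * k * Δ := by
    calc 1 < 2 * 2 * 1 := by norm_num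
      _ ≤ 2 * k * Δ := Nat.mul_le_mul (Nat.mul_le_mul le_rfl hk) hΔ
  set g : V → Fin (2 * k * Δ) → ℝ := fun v j =>
    if (j : ℕ) = 0 then fA v else if (j : ℕ) = 1 then fB v else 0 with hg
  have key : ∀ (S : Finset V) (j : Fin (2 * k * Δ)),
      ∑ v ∈ S, g v j =
        if (j : ℕ) = 0 then ∑ v ∈ S, fA v
        else if (j : ℕ) = 1 then ∑ v ∈ S, fB v else 0 := by
    intro S j
    by_cases h0 : (j : ℕ) = 0
    · simp [hg, h0]
    · by_cases h1 : (j : ℕ) = 1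
      · simp [hg, h0, h1]
      · simp [hg, h0, h1]
  refine ⟨g, ?_, ?_, ?_, ?_⟩
  · intro v j
    rw [hg]
    simp only
    split_ifs
    · exact hA0 v
    · exact hB0 v
    · exact ⟨le_rfl, zero_le_one⟩
  · intro S hS j
    rw [key]
    split_ifs
    · exact hA1 S hS
    · exact hB1 S hS
    · exact zero_le_one
  · intro S hSU hSk j
    rw [key]
    split_ifs
    · exact hA2 S hSU hSk
    · exact hB2 S hSU hSk
    · exact zero_le_one
  · intro S i i' hii' huiS hne
    obtain ⟨v, hv⟩ := hne
    rw [Finset.mem_inter] at hv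
    obtain ⟨hvS, hvb⟩ := hv
    rw [Finset.mem_biUnion] at hvb
    obtain ⟨T, hT, hvT⟩ := hvb
    rw [Finset.mem_filter] at hT
    obtain ⟨hT𝒮, hui'T⟩ := hT
    rw [Finset.mem_erase] at hvT
    obtain ⟨hvne, hvT⟩ := hvT
    have hEx : ∃ v ∈ S, ∃ T ∈ 𝒮, u i' ∈ T ∧ v ∈ T ∧ v ≠ u i' :=
      ⟨v, hvS, T, hT𝒮, hui'T, hvT, hvne⟩
    have hvalne : i.val ≠ i'.val := fun he => hii' (Fin.ext he.symm)
    rcases Nat.lt_or_ge i.val i'.val with h | h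
    · refine ⟨⟨0, by omega⟩, ?_⟩
      rw [key, if_pos rfl]
      exact hA3 S i i' h huiS hEx
    · have h' : i'.val < i.val := by omega
      refine ⟨⟨1, hdim⟩, ?_⟩
      rw [key, if_neg (by norm_num), if_pos rfl]
      apply hB3 S i i' _ huiS hEx
      have hi : i.val < m := i.isLt
      omega
end

section
/- Let k ≥ 2 and Δ ≥ 1, and let 𝒮 be a simple set family on a finite universe V that is a sunflower-bouquet with nonempty core U = {u₁, …, u_m}, in which every set has cardinality at most k and every element lies in at most Δ sets of 𝒮. For i ∈ [m] let V_i = ⋃_{S ∈ 𝒮, u_i ∈ S} (S \ {u_i}). Then there exists a map g' : V → [0,1]^{(kΔ)²} such that: (i) ‖g'(S)‖_∞ ≤ 1 for every S ∈ 𝒮; (ii) ‖g'(S)‖_∞ ≤ 1 for every S ⊆ V with S ∩ U = ∅ and |S| ≤ k; and (iii) ‖g'(S)‖_∞ > 1 for every i ∈ [m] and every S ⊆ {u_i} ∪ V_i with u_i ∈ S and S ∉ 𝒮^↓. -/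
/-!
A vertex outside the core `U` lies in exactly one set of `𝒮`, its petal. Label such vertices by
pairs (petal index, position) in `Fin Δ × Fin k`, so that petals through a common core vertex get
distinct indices and the vertices of one petal get distinct positions. Coordinates are pairs of
labels `(a, b)`: core vertices weigh `1 - 1/k` everywhere, and another vertex weighs `1/k` at
`(a, b)` if its label is `a` or `b` and the petal indices of `a` and `b` differ. Then a set of `𝒮`
has, besides its core vertex, at most one vertex of positive weight in each coordinate; a core-free
set of at most `k` vertices sums to at most `1`; and an intra-sunflower set outside `𝒮^↓` contains
its core vertex together with vertices `x`, `y` of two different petals, hence sums to `1 + 1/k` at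
the coordinate `(ℓ x, ℓ y)`.
-/

open Finset

theorem Finset.exists_fin_injOn {α : Type*} {n : ℕ} [NeZero n] (s : Finset α) (hs : #s ≤ n) :
    ∃ f : α → Fin n, Set.InjOn f s := by
  obtain ⟨e⟩ := Function.Embedding.nonempty_of_card_le (α := s) (β := Fin n) (by simpa using hs)
  exact Set.exists_injOn_iff_injective.2 ⟨e, e.injective⟩

theorem Finset.exists_fin_injOn_pair {α β : Type*} [DecidableEq β] {n : ℕ} [NeZero n]
    (f : α → β) (s : Finset α) (h : ∀ b, #{a ∈ s | f a = b} ≤ n) :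
    ∃ g : α → Fin n, Set.InjOn (fun a => (f a, g a)) s := by
  choose e he using fun b => exists_fin_injOn {a ∈ s | f a = b} (h b)
  refine ⟨fun a => e (f a) a, fun a ha a' ha' heq => ?_⟩
  obtain ⟨hf, hg⟩ := Prod.mk.inj heq
  dsimp only at hg
  rw [hf] at hg
  exact he (f a') (mem_filter.2 ⟨ha, hf⟩) (mem_filter.2 ⟨ha', rfl⟩) hg

theorem Finset.eq_singleton_of_card_eq_one_of_mem {α : Type*} {s : Finset α} {a : α}
    (hs : #s = 1) (ha : a ∈ s) : s = {a} :=
  eq_singleton_iff_unique_mem.2 ⟨ha, fun _ hb => card_le_one.1 hs.le _ hb _ ha⟩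

section Weight

variable {V P Q : Type*} [DecidableEq V] [DecidableEq P] [DecidableEq Q]
  (U : Finset V) (k : ℕ) (ℓ : V → P × Q)

noncomputable def bouquetWeight (v : V) (c : (P × Q) × (P × Q)) : ℝ :=
  if v ∈ U then 1 - (k : ℝ)⁻¹
  else if c.1.1 ≠ c.2.1 ∧ (ℓ v = c.1 ∨ ℓ v = c.2) then (k : ℝ)⁻¹ else 0

variable {U k ℓ}

theorem bouquetWeight_mem_Icc (v : V) (c : (P × Q) × (P × Q)) :
    bouquetWeight U k ℓ v c ∈ Set.Icc 0 1 := by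
  have hinv_le : (k : ℝ)⁻¹ ≤ 1 := Nat.cast_inv_le_one k
  have hinv_nonneg : (0 : ℝ) ≤ (k : ℝ)⁻¹ := by positivity
  unfold bouquetWeight
  split_ifs <;> constructor <;> first | positivity | linarith

theorem bouquetWeight_le_inv {v : V} (hv : v ∉ U) (c : (P × Q) × (P × Q)) :
    bouquetWeight U k ℓ v c ≤ (k : ℝ)⁻¹ := by
  unfold bouquetWeight
  split_ifs <;> first | positivity | rfl

theorem sum_bouquetWeight_sdiff (s : Finset V) (c : (P × Q) × (P × Q)) :
    ∑ v ∈ s \ U, bouquetWeight U k ℓ v c =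
      #{v ∈ s \ U | c.1.1 ≠ c.2.1 ∧ (ℓ v = c.1 ∨ ℓ v = c.2)} * (k : ℝ)⁻¹ := by
  rw [← nsmul_eq_mul, ← sum_const, sum_filter]
  exact sum_congr rfl fun v hv => if_neg (mem_sdiff.1 hv).2

theorem card_support_bouquetWeight_sdiff_le_one {T : Finset V} (hinj : Set.InjOn ℓ ↑(T \ U))
    (hpetal : ∀ x ∈ T \ U, ∀ y ∈ T \ U, (ℓ x).1 = (ℓ y).1) (c : (P × Q) × (P × Q)) :
    #{v ∈ T \ U | c.1.1 ≠ c.2.1 ∧ (ℓ v = c.1 ∨ ℓ v = c.2)} ≤ 1 := by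
  refine card_le_one.2 fun x hx y hy => ?_
  obtain ⟨hxT, hne, hx⟩ := mem_filter.1 hx
  obtain ⟨hyT, -, hy⟩ := mem_filter.1 hy
  have hxy := hpetal x hxT y hyT
  refine hinj hxT hyT ?_
  rcases hx with hx | hx <;> rcases hy with hy | hy
  · rw [hx, hy]
  · exact absurd (by rwa [hx, hy] at hxy) hne
  · exact absurd (by rwa [hx, hy] at hxy : c.2.1 = c.1.1).symm hne
  · rw [hx, hy]

theorem sum_bouquetWeight_le_one {T : Finset V} (hcore : #(T ∩ U) ≤ 1)
    (hinj : Set.InjOn ℓ ↑(T \ U)) (hpetal : ∀ x ∈ T \ U, ∀ y ∈ T \ U, (ℓ x).1 = (ℓ y).1)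
    (c : (P × Q) × (P × Q)) : ∑ v ∈ T, bouquetWeight U k ℓ v c ≤ 1 := by
  have hcorepart : ∑ v ∈ T ∩ U, bouquetWeight U k ℓ v c = #(T ∩ U) * (1 - (k : ℝ)⁻¹) := by
    rw [← nsmul_eq_mul, ← sum_const]
    exact sum_congr rfl fun v hv => if_pos (mem_inter.1 hv).2
  have hdetect : (#{v ∈ T \ U | c.1.1 ≠ c.2.1 ∧ (ℓ v = c.1 ∨ ℓ v = c.2)} : ℝ) ≤ 1 := by
    exact_mod_cast card_support_bouquetWeight_sdiff_le_one hinj hpetal c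
  have hinv : (k : ℝ)⁻¹ ≤ 1 := Nat.cast_inv_le_one k
  rw [← sum_filter_add_sum_filter_not T (· ∈ U), filter_mem_eq_inter, filter_notMem_eq_sdiff,
    hcorepart, sum_bouquetWeight_sdiff]
  calc _ ≤ 1 * (1 - (k : ℝ)⁻¹) + 1 * (k : ℝ)⁻¹ :=
        add_le_add (mul_le_mul_of_nonneg_right (by exact_mod_cast hcore) (by linarith))
          (mul_le_mul_of_nonneg_right hdetect (by positivity))
    _ = 1 := by ring

theorem sum_bouquetWeight_le_one_of_disjoint {S : Finset V} (hS : Disjoint S U) (hSk : #S ≤ k)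
    (c : (P × Q) × (P × Q)) : ∑ v ∈ S, bouquetWeight U k ℓ v c ≤ 1 :=
  calc ∑ v ∈ S, bouquetWeight U k ℓ v c ≤ #S • (k : ℝ)⁻¹ :=
        sum_le_card_nsmul _ _ _ fun v hv => bouquetWeight_le_inv (disjoint_left.1 hS hv) c
    _ = #S * (k : ℝ)⁻¹ := nsmul_eq_mul _ _
    _ ≤ 1 := mul_inv_le_one_of_le₀ (by exact_mod_cast hSk) (Nat.cast_nonneg k)

theorem one_lt_sum_bouquetWeight (hk : 0 < k) {S : Finset V} {c x y : V} (hcS : c ∈ S)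
    (hcU : c ∈ U) (hx : x ∈ S \ U) (hy : y ∈ S \ U) (hxy : (ℓ x).1 ≠ (ℓ y).1) :
    1 < ∑ v ∈ S, bouquetWeight U k ℓ v (ℓ x, ℓ y) := by
  obtain ⟨hxS, hxU⟩ := mem_sdiff.1 hx
  obtain ⟨hyS, hyU⟩ := mem_sdiff.1 hy
  have hwc : bouquetWeight U k ℓ c (ℓ x, ℓ y) = 1 - (k : ℝ)⁻¹ := if_pos hcU
  have hwx : bouquetWeight U k ℓ x (ℓ x, ℓ y) = (k : ℝ)⁻¹ := by
    rw [bouquetWeight, if_neg hxU, if_pos ⟨hxy, Or.inl rfl⟩]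
  have hwy : bouquetWeight U k ℓ y (ℓ x, ℓ y) = (k : ℝ)⁻¹ := by
    rw [bouquetWeight, if_neg hyU, if_pos ⟨hxy, Or.inr rfl⟩]
  have hcxy : c ∉ ({x, y} : Finset V) := by
    simp only [mem_insert, mem_singleton, not_or]
    exact ⟨ne_of_mem_of_not_mem hcU hxU, ne_of_mem_of_not_mem hcU hyU⟩
  have hkpos : (0 : ℝ) < (k : ℝ)⁻¹ := by positivity
  calc 1 < bouquetWeight U k ℓ c (ℓ x, ℓ y) +
        (bouquetWeight U k ℓ x (ℓ x, ℓ y) + bouquetWeight U k ℓ y (ℓ x, ℓ y)) := by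
        rw [hwc, hwx, hwy]
        linarith
    _ = ∑ v ∈ {c, x, y}, bouquetWeight U k ℓ v (ℓ x, ℓ y) := by
        rw [sum_insert hcxy, sum_pair fun h => hxy (congrArg (fun v => (ℓ v).1) h)]
    _ ≤ ∑ v ∈ S, bouquetWeight U k ℓ v (ℓ x, ℓ y) :=
        sum_le_sum_of_subset_of_nonneg (by simp [insert_subset_iff, hcS, hxS, hyS])
          fun v _ _ => (bouquetWeight_mem_Icc v _).1

end Weight

section Petals

variable {V : Type*} [DecidableEq V] {U : Finset V} {𝒮 : Finset (Finset V)}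

theorem exists_petal_selector (hpetal : ∀ T₁ ∈ 𝒮, ∀ T₂ ∈ 𝒮, T₁ ≠ T₂ → T₁ ∩ T₂ ⊆ U) :
    ∃ F : V → Finset V, ∀ T ∈ 𝒮, ∀ v ∈ T \ U, F v = T := by
  refine ⟨fun v => Classical.epsilon fun T => T ∈ 𝒮 ∧ v ∈ T, fun T hT v hv => ?_⟩
  obtain ⟨hvT, hvU⟩ := mem_sdiff.1 hv
  obtain ⟨hF, hvF⟩ := Classical.epsilon_spec (p := fun T => T ∈ 𝒮 ∧ v ∈ T) ⟨T, hT, hvT⟩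
  by_contra hne
  exact hvU (hpetal _ hF T hT hne (mem_inter.2 ⟨hvF, hvT⟩))

theorem exists_petal_index {Δ : ℕ} [NeZero Δ] (hcore : ∀ T ∈ 𝒮, #(T ∩ U) = 1)
    (hdeg : ∀ v, #{T ∈ 𝒮 | v ∈ T} ≤ Δ) :
    ∃ pet : Finset V → Fin Δ, Set.InjOn (fun T => (T ∩ U, pet T)) 𝒮 := by
  refine exists_fin_injOn_pair _ 𝒮 fun C => ?_
  rcases eq_empty_or_nonempty {T ∈ 𝒮 | T ∩ U = C} with h | ⟨T₀, hT₀⟩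
  · simp [h]
  obtain ⟨hT₀𝒮, rfl⟩ := mem_filter.1 hT₀
  obtain ⟨c, hc⟩ := card_eq_one.1 (hcore T₀ hT₀𝒮)
  refine (card_le_card fun T hT => ?_).trans (hdeg c)
  obtain ⟨hT𝒮, hTC⟩ := mem_filter.1 hT
  have hcT : c ∈ T ∩ U := by rw [hTC, hc]; exact mem_singleton_self c
  exact mem_filter.2 ⟨hT𝒮, (mem_inter.1 hcT).1⟩

theorem exists_petal_position {k : ℕ} [NeZero k] {F : V → Finset V}
    (hF : ∀ T ∈ 𝒮, ∀ v ∈ T \ U, F v = T) (hcard : ∀ T ∈ 𝒮, #T ≤ k) :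
    ∃ pos : V → Fin k, ∀ T ∈ 𝒮, Set.InjOn pos ↑(T \ U) := by
  obtain ⟨pos, hpos⟩ := exists_fin_injOn_pair F (𝒮.biUnion (· \ U)) fun T => by
    rcases eq_empty_or_nonempty {v ∈ 𝒮.biUnion (· \ U) | F v = T} with h | ⟨v, hv⟩
    · simp [h]
    have hfiber : ∀ w ∈ {v ∈ 𝒮.biUnion (· \ U) | F v = T}, T ∈ 𝒮 ∧ w ∈ T := fun w hw => by
      obtain ⟨hw', rfl⟩ := mem_filter.1 hw
      obtain ⟨T', hT', hwT'⟩ := mem_biUnion.1 hw'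
      rw [hF T' hT' w hwT']
      exact ⟨hT', (mem_sdiff.1 hwT').1⟩
    exact (card_le_card fun w hw => (hfiber w hw).2).trans (hcard T (hfiber v hv).1)
  refine ⟨pos, fun T hT x hx y hy hxy => hpos (mem_biUnion.2 ⟨T, hT, hx⟩)
    (mem_biUnion.2 ⟨T, hT, hy⟩) ?_⟩
  simp only [hF T hT x hx, hF T hT y hy, hxy]

theorem exists_petal_labelling {k Δ : ℕ} [NeZero k] [NeZero Δ]
    (hcore : ∀ T ∈ 𝒮, #(T ∩ U) = 1) (hpetal : ∀ T₁ ∈ 𝒮, ∀ T₂ ∈ 𝒮, T₁ ≠ T₂ → T₁ ∩ T₂ ⊆ U)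
    (hcard : ∀ T ∈ 𝒮, #T ≤ k) (hdeg : ∀ v, #{T ∈ 𝒮 | v ∈ T} ≤ Δ) :
    ∃ ℓ : V → Fin Δ × Fin k,
      (∀ T ∈ 𝒮, Set.InjOn ℓ ↑(T \ U) ∧ ∀ x ∈ T \ U, ∀ y ∈ T \ U, (ℓ x).1 = (ℓ y).1) ∧
      ∀ T₁ ∈ 𝒮, ∀ T₂ ∈ 𝒮, T₁ ≠ T₂ → (T₁ ∩ T₂).Nonempty →
        ∀ x ∈ T₁ \ U, ∀ y ∈ T₂ \ U, (ℓ x).1 ≠ (ℓ y).1 := by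
  obtain ⟨F, hF⟩ := exists_petal_selector hpetal
  obtain ⟨pet, hpet⟩ := exists_petal_index (Δ := Δ) hcore hdeg
  obtain ⟨pos, hpos⟩ := exists_petal_position (k := k) hF hcard
  refine ⟨fun v => (pet (F v), pos v), fun T hT => ⟨fun x hx y hy hxy =>
    hpos T hT hx hy (congrArg Prod.snd hxy), fun x hx y hy => by simp only [hF T hT x hx,
    hF T hT y hy]⟩, ?_⟩
  rintro T₁ hT₁ T₂ hT₂ hne ⟨z, hz⟩ x hx y hy hxy
  have hzU : z ∈ U := hpetal T₁ hT₁ T₂ hT₂ hne hz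
  have hcore_eq : T₁ ∩ U = T₂ ∩ U := by
    rw [eq_singleton_of_card_eq_one_of_mem (hcore T₁ hT₁) (mem_inter.2 ⟨(mem_inter.1 hz).1, hzU⟩),
      eq_singleton_of_card_eq_one_of_mem (hcore T₂ hT₂) (mem_inter.2 ⟨(mem_inter.1 hz).2, hzU⟩)]
  simp only [hF T₁ hT₁ x hx, hF T₂ hT₂ y hy] at hxy
  exact hne (hpet hT₁ hT₂ (Prod.ext hcore_eq hxy))

theorem exists_mem_petal_not_mem_of_not_subset (hcore : ∀ T ∈ 𝒮, #(T ∩ U) ≤ 1) {c : V}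
    {S T : Finset V} (hcU : c ∈ U) (hS : S ⊆ insert c ({T ∈ 𝒮 | c ∈ T}.biUnion (·.erase c)))
    (hcT : c ∈ T) (hST : ¬S ⊆ T) :
    ∃ T' ∈ 𝒮, c ∈ T' ∧ ∃ z ∈ S, z ∈ T' \ U ∧ z ∉ T := by
  obtain ⟨z, hzS, hzT⟩ := not_subset.1 hST
  have hzc : z ≠ c := fun h => hzT (h ▸ hcT)
  obtain ⟨T', hT', hzT'⟩ := mem_biUnion.1 ((mem_insert.1 (hS hzS)).resolve_left hzc)
  obtain ⟨hT'𝒮, hcT'⟩ := mem_filter.1 hT'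
  obtain ⟨-, hzT'⟩ := mem_erase.1 hzT'
  refine ⟨T', hT'𝒮, hcT', z, hzS, mem_sdiff.2 ⟨hzT', fun hzU => hzc ?_⟩, hzT⟩
  exact card_le_one.1 (hcore T' hT'𝒮) z (mem_inter.2 ⟨hzT', hzU⟩) c (mem_inter.2 ⟨hcT', hcU⟩)

theorem exists_two_petals_of_not_mem_downClosure (hcore : ∀ T ∈ 𝒮, #(T ∩ U) ≤ 1) {c : V}
    {S : Finset V} (hcU : c ∈ U) (hcov : ∃ T ∈ 𝒮, c ∈ T)
    (hS : S ⊆ insert c ({T ∈ 𝒮 | c ∈ T}.biUnion (·.erase c))) (hnot : ¬∃ T ∈ 𝒮, S ⊆ T) :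
    ∃ T₁ ∈ 𝒮, ∃ T₂ ∈ 𝒮, T₁ ≠ T₂ ∧ c ∈ T₁ ∩ T₂ ∧
      ∃ x ∈ S, x ∈ T₁ \ U ∧ ∃ y ∈ S, y ∈ T₂ \ U := by
  obtain ⟨T₀, hT₀, hcT₀⟩ := hcov
  obtain ⟨T₂, hT₂, hcT₂, y, hyS, hy, -⟩ :=
    exists_mem_petal_not_mem_of_not_subset hcore hcU hS hcT₀ fun h => hnot ⟨T₀, hT₀, h⟩
  obtain ⟨T₁, hT₁, hcT₁, x, hxS, hx, hxT₂⟩ :=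
    exists_mem_petal_not_mem_of_not_subset hcore hcU hS hcT₂ fun h => hnot ⟨T₂, hT₂, h⟩
  exact ⟨T₁, hT₁, T₂, hT₂, fun h => hxT₂ (h ▸ (mem_sdiff.1 hx).1), mem_inter.2 ⟨hcT₁, hcT₂⟩,
    x, hxS, hx, y, hyS, hy⟩

end Petals

theorem sunflower_bouquet_intra_sunflower_embedding_general
    {V : Type*} [Fintype V] [DecidableEq V]
    (k Δ m : ℕ) (hk : 2 ≤ k) (hΔ : 1 ≤ Δ)
    (u : Fin m → V)
    (𝒮 : Finset (Finset V))
    (hcoreone : ∀ S ∈ 𝒮, (S ∩ Finset.univ.image u).card = 1)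
    (hcorecov : ∀ i : Fin m, ∃ S ∈ 𝒮, u i ∈ S)
    (hbouquet : ∀ S₁ ∈ 𝒮, ∀ S₂ ∈ 𝒮, (S₁ ∩ S₂).Nonempty →
        S₁ ∩ Finset.univ.image u = S₂ ∩ Finset.univ.image u ∧
        S₁ ∩ Finset.univ.image u = S₁ ∩ S₂)
    (hcard : ∀ S ∈ 𝒮, S.card ≤ k)
    (hdeg : ∀ v : V, (𝒮.filter (fun S => v ∈ S)).card ≤ Δ) :
    ∃ g' : V → Fin ((k * Δ) ^ 2) → ℝ,
      (∀ v j, 0 ≤ g' v j ∧ g' v j ≤ 1) ∧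
      -- (i) every set in the family has sum at most 1 in every coordinate
      (∀ S ∈ 𝒮, ∀ j, ∑ v ∈ S, g' v j ≤ 1) ∧
      -- (ii) small sets avoiding the core have sum at most 1 in every coordinate
      (∀ S : Finset V, S ∩ Finset.univ.image u = ∅ → S.card ≤ k →
        ∀ j, ∑ v ∈ S, g' v j ≤ 1) ∧
      -- (iii) intra-sunflower sets not in the downward closure exceed 1 in some coordinate
      (∀ i : Fin m, ∀ S : Finset V,
        S ⊆ insert (u i) ((𝒮.filter (fun T => u i ∈ T)).biUnion (fun T => T.erase (u i))) →
        u i ∈ S → (¬ ∃ T ∈ 𝒮, S ⊆ T) →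
        ∃ j, 1 < ∑ v ∈ S, g' v j) := by
  have : NeZero k := ⟨by omega⟩
  have : NeZero Δ := ⟨by omega⟩
  have hpetal : ∀ T₁ ∈ 𝒮, ∀ T₂ ∈ 𝒮, T₁ ≠ T₂ → T₁ ∩ T₂ ⊆ univ.image u :=
    fun T₁ h₁ T₂ h₂ _ v hv => by
      rw [← (hbouquet T₁ h₁ T₂ h₂ ⟨v, hv⟩).2] at hv
      exact (mem_inter.1 hv).2
  obtain ⟨ℓ, hsame, hdiff⟩ := exists_petal_labelling hcoreone hpetal hcard hdeg
  let e : Fin ((k * Δ) ^ 2) ≃ (Fin Δ × Fin k) × (Fin Δ × Fin k) :=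
    Fintype.equivOfCardEq (by simp only [Fintype.card_prod, Fintype.card_fin]; ring)
  refine ⟨fun v j => bouquetWeight (univ.image u) k ℓ v (e j),
    fun v j => bouquetWeight_mem_Icc v _,
    fun T hT j => sum_bouquetWeight_le_one (hcoreone T hT).le (hsame T hT).1 (hsame T hT).2 _,
    fun S hS hSk j => sum_bouquetWeight_le_one_of_disjoint (disjoint_iff_inter_eq_empty.2 hS) hSk _,
    fun i S hS huS hnot => ?_⟩
  have huU : u i ∈ univ.image u := mem_image_of_mem u (mem_univ i)
  obtain ⟨T₁, hT₁, T₂, hT₂, hne, hu₁₂, x, hxS, hx, y, hyS, hy⟩ :=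
    exists_two_petals_of_not_mem_downClosure (fun T hT => (hcoreone T hT).le) huU (hcorecov i)
      hS hnot
  refine ⟨e.symm (ℓ x, ℓ y), ?_⟩
  simpa using one_lt_sum_bouquetWeight (by omega) huS huU (mem_sdiff.2 ⟨hxS, (mem_sdiff.1 hx).2⟩)
    (mem_sdiff.2 ⟨hyS, (mem_sdiff.1 hy).2⟩) (hdiff T₁ hT₁ T₂ hT₂ hne ⟨_, hu₁₂⟩ x hx y hy)

/-- Step 2 of the sunflower-bouquet embedding: pinning down intra-sunflower sets,
using `(kΔ)²` dimensions. Here the core is `U = {u 1, …, u m}` and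
`V_i = ⋃_{S ∈ 𝒮, u i ∈ S} (S \ {u i})`. -/
theorem sunflower_bouquet_intra_sunflower_embedding
    {V : Type*} [Fintype V] [DecidableEq V]
    (k Δ m : ℕ) (hk : 2 ≤ k) (hΔ : 1 ≤ Δ) (hm : 1 ≤ m)
    (u : Fin m → V) (hu : Function.Injective u)
    (𝒮 : Finset (Finset V))
    (hsimple : ∀ S₁ ∈ 𝒮, ∀ S₂ ∈ 𝒮, S₁ ≠ S₂ → (S₁ ∩ S₂).card ≤ 1)
    (hcoreone : ∀ S ∈ 𝒮, (S ∩ Finset.univ.image u).card = 1)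
    (hcorecov : ∀ i : Fin m, ∃ S ∈ 𝒮, u i ∈ S)
    (hbouquet : ∀ S₁ ∈ 𝒮, ∀ S₂ ∈ 𝒮, (S₁ ∩ S₂).Nonempty →
        S₁ ∩ Finset.univ.image u = S₂ ∩ Finset.univ.image u ∧
        S₁ ∩ Finset.univ.image u = S₁ ∩ S₂)
    (hcard : ∀ S ∈ 𝒮, S.card ≤ k)
    (hdeg : ∀ v : V, (𝒮.filter (fun S => v ∈ S)).card ≤ Δ) :
    ∃ g' : V → Fin ((k * Δ) ^ 2) → ℝ,
      (∀ v j, 0 ≤ g' v j ∧ g' v j ≤ 1) ∧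
      -- (i) every set in the family has sum at most 1 in every coordinate
      (∀ S ∈ 𝒮, ∀ j, ∑ v ∈ S, g' v j ≤ 1) ∧
      -- (ii) small sets avoiding the core have sum at most 1 in every coordinate
      (∀ S : Finset V, S ∩ Finset.univ.image u = ∅ → S.card ≤ k →
        ∀ j, ∑ v ∈ S, g' v j ≤ 1) ∧
      -- (iii) intra-sunflower sets not in the downward closure exceed 1 in some coordinate
      (∀ i : Fin m, ∀ S : Finset V,
        S ⊆ insert (u i) ((𝒮.filter (fun T => u i ∈ T)).biUnion (fun T => T.erase (u i))) →
        u i ∈ S → (¬ ∃ T ∈ 𝒮, S ⊆ T) →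
        ∃ j, 1 < ∑ v ∈ S, g' v j) :=
  sunflower_bouquet_intra_sunflower_embedding_general k Δ m hk hΔ u 𝒮 hcoreone hcorecov hbouquet
    hcard hdeg
end

section
/- For every positive integer n there exist vectors a₁, …, a_n, b₁, …, b_n ∈ [0,1]² such that ‖a_i + b_i‖_∞ ≤ 1 for every i ∈ [n], and ‖a_i + b_j‖_∞ > 1 for all i, j ∈ [n] with i ≠ j. (Concretely, choosing n distinct reals α₁, …, α_n ∈ (0,1) and setting a_i = (α_i, 1−α_i), b_i = (1−α_i, α_i) works.) -/
/-- For every `n` there are pairs of vectors `a i, b i ∈ [0,1]²` whose matching sums have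
`ℓ∞` norm at most 1, while all mismatched sums exceed 1 in some coordinate. -/
theorem matching_pairs_embedding (n : ℕ) (hn : 1 ≤ n) :
    ∃ a b : Fin n → Fin 2 → ℝ,
      (∀ i c, (0 ≤ a i c ∧ a i c ≤ 1) ∧ (0 ≤ b i c ∧ b i c ≤ 1)) ∧
      (∀ i : Fin n, ∀ c : Fin 2, a i c + b i c ≤ 1) ∧
      (∀ i j : Fin n, i ≠ j → ∃ c : Fin 2, 1 < a i c + b j c) := by
  set α : Fin n → ℝ := fun i => ((i : ℝ) + 1) / (n + 1) with hα
  have hnpos : (0 : ℝ) < n + 1 := by positivity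
  have h0 : ∀ i : Fin n, 0 < α i ∧ α i < 1 := by
    intro i
    constructor
    · positivity
    · rw [hα, div_lt_one hnpos]
      have : (i : ℝ) < n := by exact_mod_cast i.2
      linarith
  have hmono : ∀ i j : Fin n, (j : ℕ) < (i : ℕ) → α j < α i := by
    intro i j h
    rw [hα]
    apply div_lt_div_of_pos_right ?_ hnpos
    have : (j : ℝ) < i := by exact_mod_cast h
    linarith
  refine ⟨fun i c => if c = 0 then α i else 1 - α i,
          fun i c => if c = 0 then 1 - α i else α i, ?_, ?_, ?_⟩
  · intro i c
    obtain ⟨h1, h2⟩ := h0 i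
    by_cases hc : c = 0
    · beta_reduce; rw [if_pos hc, if_pos hc]
      exact ⟨⟨h1.le, h2.le⟩, ⟨by linarith, by linarith⟩⟩
    · beta_reduce; rw [if_neg hc, if_neg hc]
      exact ⟨⟨by linarith, by linarith⟩, ⟨h1.le, h2.le⟩⟩
  · intro i c
    by_cases hc : c = 0
    · beta_reduce; rw [if_pos hc, if_pos hc]; linarith
    · beta_reduce; rw [if_neg hc, if_neg hc]; linarith
  · intro i j hij
    rcases lt_or_gt_of_ne (fun h => hij (Fin.ext h)) with h | h
    · refine ⟨1, ?_⟩
      beta_reduce; rw [if_neg (by decide), if_neg (by decide)]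
      linarith [hmono j i h]
    · refine ⟨0, ?_⟩
      beta_reduce; rw [if_pos rfl, if_pos rfl]
      linarith [hmono i j h]
end

section
/- Let 𝒮 be a nonempty set family on a finite universe V in which every set has cardinality at most k, and let U₁, …, U_L (L ≥ 1) be a partition of V. For each j ∈ [L] define 𝒮_j = {S ∈ 𝒮 : S ∩ U_j ≠ ∅} ∪ {S ⊆ V \ U_j : |S| ≤ k}. Then ⋂_{j=1}^{L} 𝒮_j^↓ = 𝒮^↓. -/
open Finset

section SplitFamily

variable {α ι : Type*} [DecidableEq α]

/-- The paper's `𝒮_j`, for the block `U = U_j`. -/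
def splitFamily (𝒮 : Set (Finset α)) (k : ℕ) (U : Finset α) : Set (Finset α) :=
  {S | (S ∈ 𝒮 ∧ (S ∩ U).Nonempty) ∨ (S ∩ U = ∅ ∧ #S ≤ k)}

theorem subset_splitFamily {𝒮 : Set (Finset α)} {k : ℕ} (hcard : ∀ S ∈ 𝒮, #S ≤ k)
    (U : Finset α) : 𝒮 ⊆ splitFamily 𝒮 k U := by
  intro S hS
  rcases (S ∩ U).eq_empty_or_nonempty with hSU | hSU
  · exact Or.inr ⟨hSU, hcard S hS⟩
  · exact Or.inl ⟨hS, hSU⟩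

theorem mem_of_subset_mem_splitFamily {𝒮 : Set (Finset α)} {k : ℕ} {U S T : Finset α}
    (hS : S ∈ splitFamily 𝒮 k U) (hTS : T ⊆ S) (hTU : (T ∩ U).Nonempty) : S ∈ 𝒮 := by
  rcases hS with ⟨hS𝒮, -⟩ | ⟨hSU, -⟩
  · exact hS𝒮
  · exact absurd hSU (hTU.mono (inter_subset_inter_right hTS)).ne_empty

theorem exists_inter_nonempty_of_cover {T : Finset α} {U : ι → Finset α}
    (hcover : ∀ v, ∃ j, v ∈ U j) (hT : T.Nonempty) : ∃ j, (T ∩ U j).Nonempty := by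
  obtain ⟨v, hv⟩ := hT
  obtain ⟨j, hj⟩ := hcover v
  exact ⟨j, v, mem_inter.2 ⟨hv, hj⟩⟩

end SplitFamily

theorem downward_closure_decomposition_general
    {V : Type*} [DecidableEq V]
    (k L : ℕ)
    (𝒮 : Set (Finset V)) (h𝒮 : 𝒮.Nonempty)
    (hcard : ∀ S ∈ 𝒮, S.card ≤ k)
    (U : Fin L → Finset V)
    (hcover : ∀ v : V, ∃ j : Fin L, v ∈ U j) :
    ∀ T : Finset V,
      (∀ j : Fin L, ∃ S : Finset V,
          ((S ∈ 𝒮 ∧ (S ∩ U j).Nonempty) ∨ (S ∩ U j = ∅ ∧ S.card ≤ k)) ∧ T ⊆ S)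
        ↔ ∃ S ∈ 𝒮, T ⊆ S := by
  intro T
  constructor
  · intro h
    rcases T.eq_empty_or_nonempty with rfl | hT
    · obtain ⟨S, hS⟩ := h𝒮
      exact ⟨S, hS, empty_subset S⟩
    · obtain ⟨j, hTU⟩ := exists_inter_nonempty_of_cover hcover hT
      obtain ⟨S, hS, hTS⟩ := h j
      exact ⟨S, mem_of_subset_mem_splitFamily hS hTS hTU, hTS⟩
  · rintro ⟨S, hS, hTS⟩ j
    exact ⟨S, subset_splitFamily hcard (U j) hS, hTS⟩

/-- Decomposition of the downward closure: if `U 1, …, U L` partition `V` and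
`𝒮_j = {S ∈ 𝒮 : S ∩ U j ≠ ∅} ∪ {S ⊆ V \ U j : |S| ≤ k}`, then
`⋂_j 𝒮_j^↓ = 𝒮^↓`. -/
theorem downward_closure_decomposition
    {V : Type*} [Fintype V] [DecidableEq V]
    (k L : ℕ) (hL : 1 ≤ L)
    (𝒮 : Set (Finset V)) (h𝒮 : 𝒮.Nonempty)
    (hcard : ∀ S ∈ 𝒮, S.card ≤ k)
    (U : Fin L → Finset V)
    (hdisj : ∀ i j : Fin L, i ≠ j → Disjoint (U i) (U j))
    (hcover : ∀ v : V, ∃ j : Fin L, v ∈ U j) :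
    ∀ T : Finset V,
      (∀ j : Fin L, ∃ S : Finset V,
          ((S ∈ 𝒮 ∧ (S ∩ U j).Nonempty) ∨ (S ∩ U j = ∅ ∧ S.card ≤ k)) ∧ T ⊆ S)
        ↔ ∃ S ∈ 𝒮, T ⊆ S :=
  downward_closure_decomposition_general k L 𝒮 h𝒮 hcard U hcover
end

section
/- Fix integers k ≥ 3 and n ≥ 1. Suppose f : [k]^n → {0,1} satisfies the following two-coloring property: for every 2k vectors v¹, v², …, v^{2k} ∈ [k]^n (repetitions allowed) such that for every coordinate i ∈ [n] the set of values {v^j_i : j ∈ [2k]} equals all of [k], the set of values {f(v^j) : j ∈ [2k]} equals {0,1}. Then f is 1-fixing: there exist a coordinate ℓ ∈ [n] and values α, β ∈ [k] such that f(x) = 0 for every x ∈ [k]^n with x_ℓ = α, and f(x) = 1 for every x ∈ [k]^n with x_ℓ = β. -/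
/-!
If a slab `{x | x ℓ = α}` is monochromatic of colour `b`, some slab `{x | x ℓ = β}` is
monochromatic of colour `!b`: otherwise the `k` points of the first slab that are constant off `ℓ`,
together with a point of colour `b` in each slab `{x | x ℓ = c}`, form a covering family of `2k`
points of colour `b`. So it suffices to find one monochromatic slab, by induction on `n`.

Identifying the coordinates `0` and `1` preserves the two-coloring property, so by induction the
identified function has a monochromatic slab. If its direction is not the merged one, `f` restricted
to `x 0 = x 1` has a monochromatic slab, which is enough for the argument above. Otherwise some
diagonal `{x | x 0 = x 1 = α}` is monochromatic. Let `T` and `T'` be the sets of values whose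
diagonal is monochromatic of the majority colour `b` and of colour `!b`. If no slab in direction
`0` or `1` is monochromatic, colour-`b` points are found covering every value `c` at coordinates `0`
and `1`: one point for `c ∈ T`, two for `c ∉ T ∪ T'`, three for `c ∈ T'`; at most `2k` in all.
-/

namespace TwoColoring

open Finset Function

variable {k n : ℕ}

def HasTwoColoringProperty (f : (Fin n → Fin k) → Bool) : Prop :=
  ∀ v : Fin (2 * k) → Fin n → Fin k, (∀ i c, ∃ j, v j i = c) →
    (∃ j, f (v j) = false) ∧ (∃ j, f (v j) = true)

def SlabColored (f : (Fin n → Fin k) → Bool) (ℓ : Fin n) (α : Fin k) (b : Bool) : Prop :=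
  ∀ x : Fin n → Fin k, x ℓ = α → f x = b

def HasMonochromaticSlab (f : (Fin n → Fin k) → Bool) : Prop :=
  ∃ ℓ α b, SlabColored f ℓ α b

def IsOneFixing (f : (Fin n → Fin k) → Bool) : Prop :=
  ∃ ℓ α β, SlabColored f ℓ α false ∧ SlabColored f ℓ β true

open scoped Classical in
noncomputable def monochromaticDiagonals (f : (Fin n → Fin k) → Bool) (p q : Fin n) (b : Bool) :
    Finset (Fin k) :=
  {c | ∀ x : Fin n → Fin k, x p = c → x q = c → f x = b}

theorem mem_monochromaticDiagonals {f : (Fin n → Fin k) → Bool} {p q : Fin n} {b : Bool}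
    {c : Fin k} :
    c ∈ monochromaticDiagonals f p q b ↔ ∀ x : Fin n → Fin k, x p = c → x q = c → f x = b := by
  simp [monochromaticDiagonals]

section

variable {f : (Fin n → Fin k) → Bool} {p q : Fin n} {b : Bool}

theorem exists_apply_eq_of_not_hasMonochromaticSlab (h : ¬HasMonochromaticSlab f) (ℓ : Fin n)
    (c : Fin k) (b : Bool) : ∃ x : Fin n → Fin k, x ℓ = c ∧ f x = b := by
  by_contra! hc
  exact h ⟨ℓ, c, !b, fun x hx => Bool.eq_not.mpr (hc x hx)⟩

theorem disjoint_monochromaticDiagonals :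
    Disjoint (monochromaticDiagonals f p q b) (monochromaticDiagonals f p q (!b)) :=
  disjoint_left.mpr fun c hc hc' => by
    simpa using (mem_monochromaticDiagonals.mp hc _ rfl rfl).symm.trans
      (mem_monochromaticDiagonals.mp hc' (fun _ => c) rfl rfl)

theorem exists_of_notMem_monochromaticDiagonals {c : Fin k}
    (hc : c ∉ monochromaticDiagonals f p q (!b)) :
    ∃ x : Fin n → Fin k, x p = c ∧ x q = c ∧ f x = b := by
  simpa [mem_monochromaticDiagonals] using hc

end

theorem card_union_image_le {α β : Type*} [Fintype α] [DecidableEq α] [DecidableEq β]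
    {T T' : Finset α} (hdisj : Disjoint T T') (hcard : #T' ≤ #T) (g₁ g₂ g₃ g₄ g₅ : α → β) :
    #(T.image g₁ ∪ Tᶜ.image g₂ ∪ (T ∪ T')ᶜ.image g₃ ∪ T'.image g₄ ∪ T'.image g₅) ≤
      2 * Fintype.card α := by
  grw [card_union_le, card_union_le, card_union_le, card_union_le, card_image_le, card_image_le,
    card_image_le, card_image_le, card_image_le, card_compl, card_compl,
    card_union_of_disjoint hdisj]
  have := card_le_univ (T ∪ T')
  rw [card_union_of_disjoint hdisj] at this
  omega

theorem comp_succ_comp_predAbove_zero {α : Type*} {m : ℕ} {x : Fin (m + 2) → α} (hx : x 0 = x 1) :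
    (x ∘ Fin.succ) ∘ Fin.predAbove 0 = x := by
  funext i
  rcases Fin.eq_zero_or_eq_succ i with rfl | ⟨j, rfl⟩
  · simpa using hx.symm
  · simp

namespace HasTwoColoringProperty

variable {f : (Fin n → Fin k) → Bool}

theorem exists_ne_of_covers (hf : HasTwoColoringProperty f) {S : Finset (Fin n → Fin k)}
    (hS : S.Nonempty) (hcard : #S ≤ 2 * k) (hcov : ∀ i c, ∃ x ∈ S, x i = c) (b : Bool) :
    ∃ x ∈ S, f x ≠ b := by
  have : Nonempty S := hS.to_subtype
  obtain ⟨e⟩ := Function.Embedding.nonempty_of_card_le (α := S) (β := Fin (2 * k)) (by simpa)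
  set v : Fin (2 * k) → S := invFun e
  have hv : Surjective v := invFun_surjective e.injective
  obtain ⟨⟨j₀, h₀⟩, ⟨j₁, h₁⟩⟩ := hf (fun j => v j) fun i c => by
    obtain ⟨x, hxS, hxi⟩ := hcov i c
    obtain ⟨j, hj⟩ := hv ⟨x, hxS⟩
    exact ⟨j, by rw [hj]; exact hxi⟩
  cases b
  · exact ⟨v j₁, (v j₁).2, by simp [h₁]⟩
  · exact ⟨v j₀, (v j₀).2, by simp [h₀]⟩

theorem comp (hf : HasTwoColoringProperty f) {m : ℕ} (σ : Fin n → Fin m) :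
    HasTwoColoringProperty fun y : Fin m → Fin k => f (y ∘ σ) :=
  fun v hv => hf (fun j => v j ∘ σ) fun i c => hv (σ i) c

theorem exists_slabColored_not (hf : HasTwoColoringProperty f) (hk : 0 < k) {ℓ : Fin n}
    {α : Fin k} {b : Bool} (h : ∀ c : Fin k, f (update (fun _ => c) ℓ α) = b) :
    ∃ β, SlabColored f ℓ β (!b) := by
  by_contra! hno
  choose w hwℓ hwb using fun β => not_forall₂.mp (hno β)
  obtain ⟨x, hxS, hx⟩ := hf.exists_ne_of_covers
    (S := univ.image (fun c => update (fun _ => c) ℓ α) ∪ univ.image w)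
    (by simp [Fin.pos_iff_nonempty.mp hk])
    ((card_union_le _ _).trans <| by
      rw [two_mul]; gcongr <;> exact card_image_le.trans (by simp))
    (fun i c => by
      by_cases hi : i = ℓ
      · exact ⟨w c, by simp, hi ▸ hwℓ c⟩
      · exact ⟨update (fun _ => c) ℓ α, by simp, by simp [hi]⟩)
    b
  simp only [mem_union, mem_image, mem_univ, true_and] at hxS
  rcases hxS with ⟨c, rfl⟩ | ⟨c, rfl⟩
  · exact hx (h c)
  · simpa [hx] using hwb c

theorem isOneFixing_of_slabColored (hf : HasTwoColoringProperty f) (hk : 0 < k) {ℓ : Fin n}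
    {α : Fin k} {b : Bool} (h : SlabColored f ℓ α b) : IsOneFixing f := by
  obtain ⟨β, hβ⟩ := hf.exists_slabColored_not hk fun c => h _ (update_self ..)
  cases b
  · exact ⟨ℓ, α, β, h, hβ⟩
  · exact ⟨ℓ, β, α, hβ, h⟩

theorem hasMonochromaticSlab_of_card_diagonals_le (hf : HasTwoColoringProperty f) {p q : Fin n}
    (hpq : p ≠ q) {α : Fin k} {b : Bool} (hα : α ∈ monochromaticDiagonals f p q b)
    (hcard : #(monochromaticDiagonals f p q (!b)) ≤ #(monochromaticDiagonals f p q b)) :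
    HasMonochromaticSlab f := by
  by_contra hno
  set T := monochromaticDiagonals f p q b
  set T' := monochromaticDiagonals f p q (!b)
  choose wp hwp hwpb using fun c => exists_apply_eq_of_not_hasMonochromaticSlab hno p c b
  choose wq hwq hwqb using fun c => exists_apply_eq_of_not_hasMonochromaticSlab hno q c b
  have hdiag (c : Fin k) : ∃ x : Fin n → Fin k, c ∉ T' → x p = c ∧ x q = c ∧ f x = b := by
    by_cases hc : c ∈ T'
    · exact ⟨wp c, fun h => (h hc).elim⟩
    · obtain ⟨x, hx⟩ := exists_of_notMem_monochromaticDiagonals hc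
      exact ⟨x, fun _ => hx⟩
  choose s hs using hdiag
  set u : Fin k → Fin n → Fin k := fun c => update (update (fun _ => c) p α) q α
  set S := T.image (fun c _ => c) ∪ Tᶜ.image u ∪ (T ∪ T')ᶜ.image s ∪ T'.image wp ∪ T'.image wq
  have hcardS : #S ≤ 2 * k := by
    simpa only [Fintype.card_fin] using
      card_union_image_le disjoint_monochromaticDiagonals hcard (fun c _ => c) u s wp wq
  have hcov (i : Fin n) (c : Fin k) : ∃ x ∈ S, x i = c := by
    by_cases hcT : c ∈ T
    · exact ⟨fun _ => c, by simpa [S] using Or.inl ⟨c, hcT, rfl⟩, rfl⟩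
    by_cases hi : i = p ∨ i = q
    · by_cases hcT' : c ∈ T'
      · rcases hi with rfl | rfl
        · exact ⟨wp c, by simpa [S] using .inr (.inr (.inr (.inl ⟨c, hcT', rfl⟩))), hwp c⟩
        · exact ⟨wq c, by simpa [S] using .inr (.inr (.inr (.inr ⟨c, hcT', rfl⟩))), hwq c⟩
      · refine ⟨s c, by simpa [S] using .inr (.inr (.inl ⟨c, ⟨hcT, hcT'⟩, rfl⟩)), ?_⟩
        rcases hi with rfl | rfl
        exacts [(hs c hcT').1, (hs c hcT').2.1]
    · obtain ⟨hip, hiq⟩ := not_or.mp hi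
      exact ⟨u c, by simpa [S] using .inr (.inl ⟨c, hcT, rfl⟩), by simp [u, hip, hiq]⟩
  obtain ⟨x, hxS, hx⟩ := hf.exists_ne_of_covers ⟨fun _ => α, by simpa [S] using Or.inl ⟨α, hα, rfl⟩⟩
    hcardS hcov b
  simp only [S, mem_union, mem_image, mem_compl] at hxS
  rcases hxS with (((⟨c, hc, rfl⟩ | ⟨c, hc, rfl⟩) | ⟨c, hc, rfl⟩) | ⟨c, hc, rfl⟩) | ⟨c, hc, rfl⟩
  · exact hx (mem_monochromaticDiagonals.mp hc _ rfl rfl)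
  · exact hx (mem_monochromaticDiagonals.mp hα _ (by simp [u, hpq]) (by simp [u]))
  · exact hx (hs c (by simp_all)).2.2
  · exact hx (hwpb c)
  · exact hx (hwqb c)

theorem hasMonochromaticSlab_of_mem_monochromaticDiagonals (hf : HasTwoColoringProperty f)
    {p q : Fin n} (hpq : p ≠ q) {α : Fin k} {b : Bool} (hα : α ∈ monochromaticDiagonals f p q b) :
    HasMonochromaticSlab f := by
  rcases le_total #(monochromaticDiagonals f p q (!b)) #(monochromaticDiagonals f p q b) with h | h
  · exact hf.hasMonochromaticSlab_of_card_diagonals_le hpq hα h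
  · obtain ⟨β, hβ⟩ : (monochromaticDiagonals f p q (!b)).Nonempty :=
      card_pos.mp ((card_pos.mpr ⟨α, hα⟩).trans_le h)
    exact hf.hasMonochromaticSlab_of_card_diagonals_le hpq hβ (by rwa [Bool.not_not])

theorem hasMonochromaticSlab {m : ℕ} {f : (Fin (m + 1) → Fin k) → Bool}
    (hf : HasTwoColoringProperty f) (hk : 0 < k) : HasMonochromaticSlab f := by
  induction m with
  | zero =>
    exact ⟨0, ⟨0, hk⟩, f fun _ => ⟨0, hk⟩, fun x hx =>
      congrArg f (funext fun i => by rwa [Fin.fin_one_eq_zero i])⟩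
  | succ m ih =>
    -- `Fin.predAbove 0` identifies the coordinates `0` and `1`.
    obtain ⟨ℓ, α, b, hℓ⟩ := ih (hf.comp (Fin.predAbove 0))
    have hmerged (x : Fin (m + 2) → Fin k) (h01 : x 0 = x 1) (hx : x ℓ.succ = α) : f x = b := by
      simpa [comp_succ_comp_predAbove_zero h01] using hℓ (x ∘ Fin.succ) hx
    rcases Fin.eq_zero_or_eq_succ ℓ with rfl | ⟨j, rfl⟩
    · exact hf.hasMonochromaticSlab_of_mem_monochromaticDiagonals zero_ne_one
        (mem_monochromaticDiagonals.mpr fun x h0 h1 => hmerged x (h0.trans h1.symm) h1)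
    · obtain ⟨β, hβ⟩ := hf.exists_slabColored_not hk (ℓ := j.succ.succ) fun c =>
        hmerged _ (by simp [Fin.ext_iff]) (update_self ..)
      exact ⟨_, β, _, hβ⟩

end HasTwoColoringProperty

end TwoColoring

/-- Any function `f : [k]^n → {0,1}` satisfying the two-coloring property is 1-fixing. -/
theorem two_coloring_property_implies_one_fixing
    (k n : ℕ) (hk : 3 ≤ k) (hn : 1 ≤ n)
    (f : (Fin n → Fin k) → Bool)
    (hf : ∀ v : Fin (2 * k) → (Fin n → Fin k),
        (∀ i : Fin n, ∀ c : Fin k, ∃ j : Fin (2 * k), v j i = c) →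
        (∃ j, f (v j) = false) ∧ (∃ j, f (v j) = true)) :
    ∃ (ℓ : Fin n) (α β : Fin k),
      (∀ x : Fin n → Fin k, x ℓ = α → f x = false) ∧
      (∀ x : Fin n → Fin k, x ℓ = β → f x = true) := by
  have hk : 0 < k := by omega
  obtain ⟨m, rfl⟩ := Nat.exists_eq_add_one.mpr hn
  have hf : TwoColoring.HasTwoColoringProperty f := hf
  obtain ⟨ℓ, α, b, h⟩ := hf.hasMonochromaticSlab hk
  exact hf.isOneFixing_of_slabColored hk h
end

section
/- Fix integers k ≥ 3 and n ≥ 1. Suppose f : [k]^n → {0,1} satisfies the two-coloring property: for every 2k vectors v¹, …, v^{2k} ∈ [k]^n (repetitions allowed) such that for every coordinate i ∈ [n] the set {v^j_i : j ∈ [2k]} equals all of [k], the values {f(v^j) : j ∈ [2k]} equal {0,1}. Suppose moreover there exist ℓ ∈ [n], α ∈ [k] and b ∈ {0,1} such that f(x) = b for every x ∈ [k]^n with x_ℓ = α. Then there exists β ∈ [k] such that f(x) = 1 − b for every x ∈ [k]^n with x_ℓ = β. -/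
/-- If `f : [k]^n → {0,1}` has the two-coloring property and is constantly `b` on
`{x : x ℓ = α}`, then it is constantly `!b` on `{x : x ℓ = β}` for some `β`. -/
theorem two_coloring_property_opposite_value
    (k n : ℕ) (hk : 3 ≤ k) (hn : 1 ≤ n)
    (f : (Fin n → Fin k) → Bool)
    (hf : ∀ v : Fin (2 * k) → (Fin n → Fin k),
        (∀ i : Fin n, ∀ c : Fin k, ∃ j : Fin (2 * k), v j i = c) →
        (∃ j, f (v j) = false) ∧ (∃ j, f (v j) = true))
    (ℓ : Fin n) (α : Fin k) (b : Bool)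
    (hfix : ∀ x : Fin n → Fin k, x ℓ = α → f x = b) :
    ∃ β : Fin k, ∀ x : Fin n → Fin k, x ℓ = β → f x = !b := by
  by_contra h
  push_neg at h
  choose w hw hfw using h
  have hfwb : ∀ β, f (w β) = b := by
    intro β
    have := hfw β
    cases b <;> cases hfb : f (w β) <;> simp_all
  set z : Fin k → Fin n → Fin k := fun c i => if i = ℓ then α else c with hz
  have hfz : ∀ c, f (z c) = b := fun c => hfix _ (if_pos rfl)
  set v : Fin (2 * k) → Fin n → Fin k := fun j =>
    if hj : j.1 < k then w ⟨j.1, hj⟩ else z ⟨j.1 - k, by omega⟩ with hv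
  have cov : ∀ i : Fin n, ∀ c : Fin k, ∃ j : Fin (2 * k), v j i = c := by
    intro i c
    by_cases hi : i = ℓ
    · refine ⟨⟨c.1, by omega⟩, ?_⟩
      have hc : (⟨c.1, c.2⟩ : Fin k) = c := rfl
      simp only [hv, dif_pos c.2, hc, hi]
      exact hw c
    · refine ⟨⟨k + c.1, by omega⟩, ?_⟩
      have hlt : ¬ (k + c.1 < k) := by omega
      simp only [hv, dif_neg hlt]
      have hc : (⟨k + c.1 - k, by omega⟩ : Fin k) = c := by
        ext; simp
      rw [hc, hz]
      simp [hi]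
  have hall : ∀ j, f (v j) = b := by
    intro j
    by_cases hj : j.1 < k
    · simp only [hv, dif_pos hj]; exact hfwb _
    · simp only [hv, dif_neg hj]; exact hfz _
  obtain ⟨⟨j1, h1⟩, ⟨j2, h2⟩⟩ := hf v cov
  have e1 := hall j1
  have e2 := hall j2
  cases b <;> simp_all
end
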